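/- Let κ be a measurable cardinal and let U be a normal ultrafilter on κ. Then for every 1 ≤ d < ω and every cardinal σ with 0 < σ < κ: SDHL(d,σ,κ) holds if and only if the set {α < κ : α is an infinite cardinal, σ < α, and SDHL(d,σ,α) holds} belongs to U. -/

import Mathlib

open Cardinal Set

/-- A node of `^{<κ}κ`: a function from an ordinal `len < κ` into the ordinals `< κ`,
normalized to take value `0` at or beyond its length (so that equality of nodes is
extensional). -/
structure SeqNode (κ : Cardinal.{0}) : Type 1 where
  len : Ordinal.{0}
  len_lt : len < κ.ord
  val : Ordinal.{0} → Ordinal.{0}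
  val_lt : ∀ β < len, val β < κ.ord
  val_eq_zero : ∀ β, len ≤ β → val β = 0

namespace SeqNode

variable {κ : Cardinal.{0}}

/-- `s.Init t` means `s ⊑ t`, i.e. `s` is an initial segment of `t`. -/
def Init (s t : SeqNode κ) : Prop :=
  s.len ≤ t.len ∧ ∀ β < s.len, s.val β = t.val β

/-- The restriction `t ↾ β` of `t` to length `min β t.len`. -/
noncomputable def restrict (t : SeqNode κ) (β : Ordinal.{0}) : SeqNode κ where
  len := min β t.len
  len_lt := lt_of_le_of_lt (min_le_right _ _) t.len_lt
  val := fun γ => if γ < min β t.len then t.val γ else 0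
  val_lt := fun γ hγ => by
    try dsimp only
    rw [if_pos hγ]
    exact t.val_lt γ (lt_of_lt_of_le hγ (min_le_right _ _))
  val_eq_zero := fun γ hγ => by
    try dsimp only
    rw [if_neg (not_lt.mpr hγ)]

end SeqNode

/-- The level `T(α)`: nodes of `T` of length `α`. -/
def SeqLevel {κ : Cardinal.{0}} (T : Set (SeqNode κ)) (α : Ordinal.{0}) : Set (SeqNode κ) :=
  {t ∈ T | t.len = α}

/-- A tree: a set of nodes closed under initial segments. -/
def IsSeqTree {κ : Cardinal.{0}} (T : Set (SeqNode κ)) : Prop :=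
  ∀ t ∈ T, ∀ s : SeqNode κ, s.Init t → s ∈ T

/-- A branch of `T`: a subset of `T` linearly ordered by the initial segment relation. -/
def IsBranch {κ : Cardinal.{0}} (T b : Set (SeqNode κ)) : Prop :=
  b ⊆ T ∧ ∀ s ∈ b, ∀ t ∈ b, s.Init t ∨ t.Init s

/-- A maximal branch of `T`. -/
def IsMaximalBranch {κ : Cardinal.{0}} (T b : Set (SeqNode κ)) : Prop :=
  IsBranch T b ∧ ∀ b' : Set (SeqNode κ), IsBranch T b' → b ⊆ b' → b' = b

/-- `T` is perfect: every node has two incomparable extensions in `T`. -/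
def IsPerfect {κ : Cardinal.{0}} (T : Set (SeqNode κ)) : Prop :=
  ∀ t ∈ T, ∃ s ∈ T, ∃ u ∈ T, t.Init s ∧ t.Init u ∧ ¬ s.Init u ∧ ¬ u.Init s

/-- `T ⊆ ^{<κ}κ` is a regular tree of height `η`: it is a tree all of whose nodes
have length `< η`, it has nonempty levels of cardinality `< η.card` at every `α < η`,
every maximal branch meets every level `< η`, and it is perfect. -/
def IsRegularTreeIn (κ : Cardinal.{0}) (η : Ordinal.{0}) (T : Set (SeqNode κ)) : Prop :=
  IsSeqTree T ∧
  (∀ t ∈ T, t.len < η) ∧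
  (∀ α < η, (SeqLevel T α).Nonempty) ∧
  (∀ α < η, Cardinal.mk ↥(SeqLevel T α) < Cardinal.lift.{1} η.card) ∧
  (∀ b : Set (SeqNode κ), IsMaximalBranch T b → ∀ α < η, ∃ t ∈ b, t.len = α) ∧
  IsPerfect T

/-- A regular `κ`-tree. -/
def IsRegularTree (κ : Cardinal.{0}) (T : Set (SeqNode κ)) : Prop :=
  IsRegularTreeIn κ κ.ord T

/-- The truncation `T ∩ ^{<α}κ` of `T` below level `α`. -/
def TreeTrunc {κ : Cardinal.{0}} (T : Set (SeqNode κ)) (α : Ordinal.{0}) : Set (SeqNode κ) :=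
  {t ∈ T | t.len < α}

/-- The level product `⊗_{i<d} X_i`: tuples all of whose entries lie on one common level. -/
def LevelProd {κ : Cardinal.{0}} {d : ℕ} (X : Fin d → Set (SeqNode κ)) :
    Set (Fin d → SeqNode κ) :=
  {x | ∃ α : Ordinal.{0}, ∀ i, x i ∈ X i ∧ (x i).len = α}

/-- `X` dominates `Y`: every element of `Y` has an extension in `X`. -/
def Dominates {κ : Cardinal.{0}} (X Y : Set (SeqNode κ)) : Prop :=
  ∀ y ∈ Y, ∃ x ∈ X, SeqNode.Init y x

/-- `Cone t`: all extensions of `t`. -/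
def Cone {κ : Cardinal.{0}} (t : SeqNode κ) : Set (SeqNode κ) :=
  {s : SeqNode κ | t.Init s}

/-- `X` is a somewhere dense level matrix for trees `T` of height `η`. -/
def IsSDMatrixIn {κ : Cardinal.{0}} (η : Ordinal.{0}) {d : ℕ}
    (T X : Fin d → Set (SeqNode κ)) : Prop :=
  ∃ α β : Ordinal.{0}, α < β ∧ β < η ∧
    ∃ t : Fin d → SeqNode κ,
      (∀ i, t i ∈ SeqLevel (T i) α) ∧
      ∀ i, X i ⊆ SeqLevel (T i) β ∧
        Dominates (X i) (SeqLevel (T i) (α + 1) ∩ Cone (t i))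

/-- `X` is a somewhere dense level matrix for the regular `κ`-trees `T`. -/
def IsSDMatrix (κ : Cardinal.{0}) {d : ℕ} (T X : Fin d → Set (SeqNode κ)) : Prop :=
  IsSDMatrixIn κ.ord T X

/-- The coloring `c` is constant (monochromatic) on the level product of `X`. -/
def MonoOn {κ : Cardinal.{0}} {d : ℕ} (c : (Fin d → SeqNode κ) → Ordinal.{0})
    (X : Fin d → Set (SeqNode κ)) : Prop :=
  ∀ x ∈ LevelProd X, ∀ y ∈ LevelProd X, c x = c y

/-- The somewhere dense Halpern–Läuchli theorem `SDHL(d,σ,κ)`. -/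
def SDHL (d : ℕ) (σ κ : Cardinal.{0}) : Prop :=
  ∀ T : Fin d → Set (SeqNode κ), (∀ i, IsRegularTree κ (T i)) →
    ∀ c : (Fin d → SeqNode κ) → Ordinal.{0},
      (∀ x ∈ LevelProd T, c x < σ.ord) →
      ∃ X : Fin d → Set (SeqNode κ), (∀ i, X i ⊆ T i) ∧
        IsSDMatrix κ T X ∧ MonoOn c X

/-- `s` is an immediate successor of `t`. -/
def IsImmediateSucc {κ : Cardinal.{0}} (t s : SeqNode κ) : Prop :=
  t.Init s ∧ s.len = t.len + 1

/-- `A` is a cofinal subset of (the ordinals below) `η`. -/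
def CofinalIn (A : Set Ordinal.{0}) (η : Ordinal.{0}) : Prop :=
  A ⊆ Set.Iio η ∧ ∀ β < η, ∃ α ∈ A, β ≤ α

/-- `T'` is a strong subtree of the regular `κ`-tree `T` witnessed by the cofinal set
`A ⊆ κ` of splitting levels. -/
def IsStrongSubtree (κ : Cardinal.{0}) (T' T : Set (SeqNode κ)) (A : Set Ordinal.{0}) : Prop :=
  T' ⊆ T ∧ IsRegularTree κ T' ∧ CofinalIn A κ.ord ∧
    ∀ t ∈ T',
      (t.len ∈ A → ∀ s ∈ T, IsImmediateSucc t s → s ∈ T') ∧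
      (t.len ∉ A → ∃! s : SeqNode κ, s ∈ T' ∧ IsImmediateSucc t s)

/-- The strong tree Halpern–Läuchli theorem `HL(d,σ,κ)`. -/
def HL (d : ℕ) (σ κ : Cardinal.{0}) : Prop :=
  ∀ T : Fin d → Set (SeqNode κ), (∀ i, IsRegularTree κ (T i)) →
    ∀ c : (Fin d → SeqNode κ) → Ordinal.{0},
      (∀ x ∈ LevelProd T, c x < σ.ord) →
      ∃ T' : Fin d → Set (SeqNode κ), ∃ A : Set Ordinal.{0},
        (∀ i, IsStrongSubtree κ (T' i) (T i) A) ∧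
        ∀ x : Fin d → SeqNode κ, (∃ α ∈ A, ∀ i, x i ∈ SeqLevel (T' i) α) →
          ∀ y : Fin d → SeqNode κ, (∃ α ∈ A, ∀ i, y i ∈ SeqLevel (T' i) α) →
            c x = c y

/-- `e` is the increasing enumeration (along the ordinals below `η`) of `A`. -/
def IsIncreasingEnum (e : Ordinal.{0} → Ordinal.{0}) (η : Ordinal.{0})
    (A : Set Ordinal.{0}) : Prop :=
  (∀ ζ < η, e ζ ∈ A) ∧
  (∀ ζ ξ : Ordinal.{0}, ζ < ξ → ξ < η → e ζ < e ξ) ∧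
  (∀ a ∈ A, ∃ ζ < η, e ζ = a)

/-- The tail cone Halpern–Läuchli theorem `HL^tc(d,<κ,κ)`. -/
def HLtc (d : ℕ) (κ : Cardinal.{0}) : Prop :=
  ∀ T : Fin d → Set (SeqNode κ), (∀ i, IsRegularTree κ (T i)) →
    ∀ σ : Ordinal.{0} → Cardinal.{0}, (∀ ζ < κ.ord, 0 < σ ζ ∧ σ ζ < κ) →
      ∀ c : Ordinal.{0} → (Fin d → SeqNode κ) → Ordinal.{0},
        (∀ ζ < κ.ord, ∀ x ∈ LevelProd T, c ζ x < (σ ζ).ord) →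
        ∃ T' : Fin d → Set (SeqNode κ), ∃ A : Set Ordinal.{0},
          ∃ e : Ordinal.{0} → Ordinal.{0},
            (∀ i, IsStrongSubtree κ (T' i) (T i) A) ∧
            IsIncreasingEnum e κ.ord A ∧
            ∀ ζ ξ : Ordinal.{0}, ζ ≤ ξ → ξ < κ.ord →
              ∀ t : Fin d → SeqNode κ, (∀ i, t i ∈ SeqLevel (T' i) (e ξ)) →
                c ζ t = c ζ (fun i => (t i).restrict (e ζ))

/-- The modified tail cone Halpern–Läuchli theorem. -/
def HLtcMod (d : ℕ) (κ : Cardinal.{0}) : Prop :=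
  ∀ T : Fin d → Set (SeqNode κ), (∀ i, IsRegularTree κ (T i)) →
    ∀ σ : Ordinal.{0} → Cardinal.{0}, (∀ ζ < κ.ord, 0 < σ ζ ∧ σ ζ < κ) →
      ∀ c : Ordinal.{0} → (Fin d → SeqNode κ) → Ordinal.{0},
        (∀ ζ < κ.ord, ∀ x ∈ LevelProd T, c ζ x < (σ ζ).ord) →
        ∃ T' : Fin d → Set (SeqNode κ), ∃ A : Set Ordinal.{0},
          ∃ e : Ordinal.{0} → Ordinal.{0},
            (∀ i, IsStrongSubtree κ (T' i) (T i) A) ∧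
            IsIncreasingEnum e κ.ord A ∧
            ∃ μ : Ordinal.{0} → Ordinal.{0},
              (∀ γ < κ.ord, γ ≤ μ γ ∧ μ γ < κ.ord) ∧
              ∀ ζ γ : Ordinal.{0}, ζ ≤ γ → γ < κ.ord →
                ∀ t : Fin d → SeqNode κ, (∀ i, t i ∈ SeqLevel (T' i) (e γ)) →
                  c (μ ζ) t = c (μ ζ) (fun i => (t i).restrict (e ζ))

/-- `κ` is strongly inaccessible: uncountable, regular, and a strong limit. -/
def StronglyInaccessible (κ : Cardinal.{0}) : Prop :=
  ℵ₀ < κ ∧ κ.IsRegular ∧ ∀ lam : Cardinal.{0}, lam < κ → (2 : Cardinal.{0}) ^ lam < κ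

/-- `C` is a club (closed unbounded) subset of the ordinals below `η`. -/
def IsClubIn (C : Set Ordinal.{0}) (η : Ordinal.{0}) : Prop :=
  C ⊆ Set.Iio η ∧ (∀ β < η, ∃ γ ∈ C, β ≤ γ) ∧
    ∀ s ⊆ C, s.Nonempty → sSup s < η → sSup s ∈ C

/-- `S` is a stationary subset of the ordinals below `η`. -/
def IsStationaryIn (S : Set Ordinal.{0}) (η : Ordinal.{0}) : Prop :=
  ∀ C : Set Ordinal.{0}, IsClubIn C η → (S ∩ C).Nonempty

/-- `U` is an ultrafilter on the ordinals below `η`. -/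
def IsUltrafilterOn (U : Set (Set Ordinal.{0})) (η : Ordinal.{0}) : Prop :=
  (∀ A ∈ U, A ⊆ Set.Iio η) ∧ Set.Iio η ∈ U ∧ (∅ : Set Ordinal.{0}) ∉ U ∧
  (∀ A ∈ U, ∀ B : Set Ordinal.{0}, A ⊆ B → B ⊆ Set.Iio η → B ∈ U) ∧
  (∀ A ∈ U, ∀ B ∈ U, A ∩ B ∈ U) ∧
  (∀ A : Set Ordinal.{0}, A ⊆ Set.Iio η → (A ∈ U ∨ Set.Iio η \ A ∈ U))

/-- `U` is `κ`-complete: closed under intersections of fewer than `κ` of its members. -/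
def IsKappaComplete (U : Set (Set Ordinal.{0})) (κ : Cardinal.{0}) : Prop :=
  ∀ s : Set (Set Ordinal.{0}), s ⊆ U → s.Nonempty →
    Cardinal.mk ↥s < Cardinal.lift.{1} κ → ⋂₀ s ∈ U

/-- `U` is nonprincipal. -/
def IsNonprincipal (U : Set (Set Ordinal.{0})) : Prop :=
  ∀ β : Ordinal.{0}, ({β} : Set Ordinal.{0}) ∉ U

/-- `U` is a normal ultrafilter on `κ`: a nonprincipal `κ`-complete ultrafilter closed
under diagonal intersections. -/
def IsNormalUltrafilterOn (U : Set (Set Ordinal.{0})) (κ : Cardinal.{0}) : Prop :=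
  IsUltrafilterOn U κ.ord ∧ IsKappaComplete U κ ∧ IsNonprincipal U ∧
    ∀ A : Ordinal.{0} → Set Ordinal.{0}, (∀ α < κ.ord, A α ∈ U) →
      {β : Ordinal.{0} | β < κ.ord ∧ ∀ α < β, β ∈ A α} ∈ U

/-- `κ` is a measurable cardinal. -/
def IsMeasurableCard (κ : Cardinal.{0}) : Prop :=
  ℵ₀ < κ ∧ ∃ U : Set (Set Ordinal.{0}),
    IsUltrafilterOn U κ.ord ∧ IsKappaComplete U κ ∧ IsNonprincipal U

/-- The set of (ordinals which are) infinite cardinals `α < κ` with `σ < α` at which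
`SDHL(d,σ,α)` holds, viewed as a set of ordinals below `κ`. -/
def SDHLset (d : ℕ) (σ κ : Cardinal.{0}) : Set Ordinal.{0} :=
  {β : Ordinal.{0} | β < κ.ord ∧ ℵ₀ ≤ β.card ∧ β.card.ord = β ∧ σ < β.card ∧
    SDHL d σ β.card}

/-!
A normal ultrafilter `U` on `κ` lets one pass between `κ` and `U`-almost every cardinal `β < κ`.

If `SDHL(d,σ,β)` holds for `U`-almost all `β`, take regular `κ`-trees and a colouring. Closure of
`U` under diagonal intersections gives a `U`-large set of `β` that reflect the trees: cut at
`β` they are regular `β`-trees inside `^{<β}β`. A somewhere dense monochromatic matrix found at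
such a `β` is one for the original trees.

If `SDHL(d,σ,β)` fails for `U`-almost all `β`, choose counterexamples `T_β`, `c_β` and take
their ultralimit: `t` is in the limit tree when `t ∈ T_β` for `U`-almost all `β`, and the limit
colouring is the value `c_β` takes `U`-almost everywhere. Fodor's lemma and `κ`-completeness
make the limit trees regular `κ`-trees. A somewhere dense monochromatic matrix for them has
fewer than `κ` nodes, so it is one for `T_β` and `c_β` for `U`-almost all `β`, a contradiction.
-/

open Filter

namespace SeqNode

variable {κ μ : Cardinal.{0}}

theorem ext_of_len_eq {s t : SeqNode κ} (hlen : s.len = t.len)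
    (hval : ∀ ξ < s.len, s.val ξ = t.val ξ) : s = t := by
  obtain ⟨l, hl, v, hv, hz⟩ := s
  obtain ⟨l', hl', v', hv', hz'⟩ := t
  dsimp only at hlen hval
  subst hlen
  obtain rfl : v = v' := funext fun ξ =>
    (lt_or_ge ξ l).elim (hval ξ) fun h => (hz ξ h).trans (hz' ξ h).symm
  rfl

theorem Init.refl (t : SeqNode κ) : t.Init t := ⟨le_rfl, fun _ _ => rfl⟩

theorem Init.trans {s t u : SeqNode κ} (h₁ : s.Init t) (h₂ : t.Init u) : s.Init u :=
  ⟨h₁.1.trans h₂.1, fun ξ hξ => (h₁.2 ξ hξ).trans (h₂.2 ξ (hξ.trans_le h₁.1))⟩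

theorem Init.eq_of_len_le {s t : SeqNode κ} (h : s.Init t) (hl : t.len ≤ s.len) : s = t :=
  ext_of_len_eq (h.1.antisymm hl) h.2

theorem Init.total_of_init {s u t : SeqNode κ} (hs : s.Init t) (hu : u.Init t) :
    s.Init u ∨ u.Init s := by
  rcases le_total s.len u.len with h | h
  · exact .inl ⟨h, fun ξ hξ => (hs.2 ξ hξ).trans (hu.2 ξ (hξ.trans_le h)).symm⟩
  · exact .inr ⟨h, fun ξ hξ => (hu.2 ξ hξ).trans (hs.2 ξ (hξ.trans_le h)).symm⟩

theorem len_restrict {t : SeqNode κ} {δ : Ordinal.{0}} (h : δ ≤ t.len) :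
    (t.restrict δ).len = δ :=
  min_eq_left h

theorem restrict_init (t : SeqNode κ) (δ : Ordinal.{0}) : (t.restrict δ).Init t :=
  ⟨min_le_right _ _, fun _ hξ => if_pos hξ⟩

/-- `t ∈ ^{<η}η`. -/
def BoundedBy (t : SeqNode κ) (η : Ordinal.{0}) : Prop :=
  t.len < η ∧ ∀ ξ < t.len, t.val ξ < η

theorem Init.boundedBy {s t : SeqNode κ} {η : Ordinal.{0}} (h : s.Init t) (ht : t.BoundedBy η) :
    s.BoundedBy η :=
  ⟨h.1.trans_lt ht.1, fun ξ hξ => h.2 ξ hξ ▸ ht.2 ξ (hξ.trans_le h.1)⟩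

/-- The inclusion of `^{<μ}μ` into `^{<κ}κ`. -/
def lift (h : μ.ord ≤ κ.ord) (t : SeqNode μ) : SeqNode κ where
  len := t.len
  len_lt := t.len_lt.trans_le h
  val := t.val
  val_lt ξ hξ := (t.val_lt ξ hξ).trans_le h
  val_eq_zero := t.val_eq_zero

variable (h : μ.ord ≤ κ.ord)

@[simp] theorem len_lift (t : SeqNode μ) : (lift h t).len = t.len := rfl

theorem lift_injective : Function.Injective (lift h) := fun _ _ e =>
  ext_of_len_eq (congrArg len e :) fun ξ _ => congrFun (congrArg val e :) ξ

theorem lift_init_lift_iff {s t : SeqNode μ} : (lift h s).Init (lift h t) ↔ s.Init t := Iff.rfl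

theorem boundedBy_lift (t : SeqNode μ) : (lift h t).BoundedBy μ.ord := ⟨t.len_lt, t.val_lt⟩

theorem range_lift : Set.range (lift h) = {t | t.BoundedBy μ.ord} := by
  ext t
  refine ⟨?_, fun ht => ⟨⟨t.len, ht.1, t.val, ht.2, t.val_eq_zero⟩, rfl⟩⟩
  rintro ⟨s, rfl⟩
  exact boundedBy_lift h s

theorem exists_lift_eq_of_init {s : SeqNode κ} {t : SeqNode μ} (hs : s.Init (lift h t)) :
    ∃ s₀, lift h s₀ = s := by
  rw [← mem_range, range_lift]
  exact hs.boundedBy (boundedBy_lift h t)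

end SeqNode

section Trees

variable {κ : Cardinal.{0}} {η : Ordinal.{0}} {T : Set (SeqNode κ)}

/-- For trees, equivalent to every maximal branch meeting every level below `η`
(`isRegularTreeIn_iff`); unlike that condition, it passes to limits, truncations and images. -/
def BranchesExtend (η : Ordinal.{0}) (T : Set (SeqNode κ)) : Prop :=
  ∀ C, IsBranch T C → ∀ δ < η, (∀ u ∈ C, u.len ≤ δ) → ∃ s ∈ SeqLevel T δ, ∀ u ∈ C, u.Init s

theorem BranchesExtend.nonempty_seqLevel (hT : BranchesExtend η T) {δ : Ordinal.{0}}
    (hδ : δ < η) : (SeqLevel T δ).Nonempty :=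
  let ⟨s, hs, _⟩ := hT ∅ ⟨empty_subset T, by simp⟩ δ hδ (by simp)
  ⟨s, hs⟩

theorem IsBranch.exists_isMaximalBranch {b : Set (SeqNode κ)} (hb : IsBranch T b) :
    ∃ b', IsMaximalBranch T b' ∧ b ⊆ b' := by
  obtain ⟨m, hbm, hmax⟩ := zorn_subset_nonempty {b' | IsBranch T b'}
    (fun c hc hchain _ => ⟨⋃₀ c,
      ⟨fun t ⟨b₁, hb₁, ht⟩ => (hc hb₁).1 ht, fun s ⟨b₁, hb₁, hs⟩ t ⟨b₂, hb₂, ht⟩ =>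
        (hchain.total hb₁ hb₂).elim (fun h => (hc hb₂).2 s (h hs) t ht)
          (fun h => (hc hb₁).2 s hs t (h ht))⟩,
      fun _ => subset_sUnion_of_mem⟩) b hb
  exact ⟨m, ⟨hmax.prop, fun b' hb' hsub => hmax.eq_of_ge hb' hsub⟩, hbm⟩

theorem IsMaximalBranch.mem_of_forall_init_or_init {b : Set (SeqNode κ)}
    (hb : IsMaximalBranch T b) {s : SeqNode κ} (hs : s ∈ T)
    (hcomp : ∀ t ∈ b, s.Init t ∨ t.Init s) : s ∈ b := by
  have hbr : IsBranch T (insert s b) := by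
    refine ⟨insert_subset hs hb.1.1, ?_⟩
    rintro u (rfl | hu) v (rfl | hv)
    · exact .inl (.refl _)
    · exact hcomp v hv
    · exact (hcomp u hu).symm
    · exact hb.1.2 u hu v hv
  exact hb.2 _ hbr (subset_insert s b) ▸ mem_insert s b

theorem branchesExtend_of_isMaximalBranch
    (hmb : ∀ b, IsMaximalBranch T b → ∀ α < η, ∃ t ∈ b, t.len = α) : BranchesExtend η T := by
  intro C hC δ hδ hlen
  obtain ⟨b, hb, hCb⟩ := hC.exists_isMaximalBranch
  obtain ⟨s, hsb, rfl⟩ := hmb b hb δ hδ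
  refine ⟨s, ⟨hb.1.1 hsb, rfl⟩, fun u hu => ?_⟩
  refine (hb.1.2 u (hCb hu) s hsb).elim id fun hsu => ?_
  rw [hsu.eq_of_len_le (hlen u hu)]
  exact .refl u

theorem IsMaximalBranch.exists_len_eq (hT : IsSeqTree T) (hext : BranchesExtend η T)
    {b : Set (SeqNode κ)} (hb : IsMaximalBranch T b) {γ : Ordinal.{0}} (hγ : γ < η) :
    ∃ t ∈ b, t.len = γ := by
  by_cases hlong : ∃ t ∈ b, γ ≤ t.len
  · obtain ⟨t, htb, hγt⟩ := hlong
    have hr := t.restrict_init γ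
    refine ⟨t.restrict γ, hb.mem_of_forall_init_or_init (hT t (hb.1.1 htb) _ hr) fun u hu => ?_,
      SeqNode.len_restrict hγt⟩
    exact (hb.1.2 u hu t htb).elim (fun hut => (hr.total_of_init hut))
      fun htu => .inl (hr.trans htu)
  · push Not at hlong
    obtain ⟨s, hs, hbs⟩ := hext b hb.1 γ hγ fun u hu => (hlong u hu).le
    exact ⟨s, hb.mem_of_forall_init_or_init hs.1 fun t ht => .inr (hbs t ht), hs.2⟩

theorem IsBranch.injOn_len {C : Set (SeqNode κ)} (hC : IsBranch T C) :
    InjOn SeqNode.len C := fun u hu v hv huv =>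
  (hC.2 u hu v hv).elim (fun h => h.eq_of_len_le huv.ge) fun h => (h.eq_of_len_le huv.le).symm

theorem isRegularTreeIn_iff :
    IsRegularTreeIn κ η T ↔ IsSeqTree T ∧ (∀ t ∈ T, t.len < η) ∧
      (∀ α < η, #(SeqLevel T α) < Cardinal.lift.{1} η.card) ∧ BranchesExtend η T ∧
      IsPerfect T := by
  constructor
  · rintro ⟨htree, hlen, -, hcard, hmb, hperf⟩
    exact ⟨htree, hlen, hcard, branchesExtend_of_isMaximalBranch hmb, hperf⟩
  · rintro ⟨htree, hlen, hcard, hext, hperf⟩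
    exact ⟨htree, hlen, fun α hα => hext.nonempty_seqLevel hα, hcard,
      fun b hb γ hγ => hb.exists_len_eq htree hext hγ, hperf⟩

end Trees

namespace SeqNode

variable {κ μ : Cardinal.{0}} (h : μ.ord ≤ κ.ord) {η : Ordinal.{0}} {d : ℕ}

theorem seqLevel_image_lift (T : Set (SeqNode μ)) (α : Ordinal.{0}) :
    SeqLevel (lift h '' T) α = lift h '' SeqLevel T α := by
  ext t
  constructor
  · rintro ⟨⟨s, hs, rfl⟩, hlen⟩
    exact ⟨s, ⟨hs, hlen⟩, rfl⟩
  · rintro ⟨s, ⟨hs, hlen⟩, rfl⟩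
    exact ⟨⟨s, hs, rfl⟩, hlen⟩

theorem image_lift_inter_cone (A : Set (SeqNode μ)) (t : SeqNode μ) :
    lift h '' A ∩ Cone (lift h t) = lift h '' (A ∩ Cone t) :=
  (image_inter_preimage _ _ _).symm

theorem exists_eq_image_lift {X' : Fin d → Set (SeqNode κ)}
    (hX' : ∀ i, X' i ⊆ range (lift h)) : ∃ X : Fin d → Set (SeqNode μ),
      X' = fun i => lift h '' X i :=
  ⟨fun i => lift h ⁻¹' X' i, funext fun i => (image_preimage_eq_of_subset (hX' i)).symm⟩

variable {T : Set (SeqNode μ)}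

theorem isSeqTree_image_lift_iff : IsSeqTree (lift h '' T) ↔ IsSeqTree T := by
  constructor
  · intro hT t ht s hs
    exact (lift_injective h).mem_set_image.1 (hT _ (mem_image_of_mem _ ht) _ hs)
  · rintro hT _ ⟨t, ht, rfl⟩ s hs
    obtain ⟨s, rfl⟩ := exists_lift_eq_of_init h hs
    exact mem_image_of_mem _ (hT t ht s hs)

theorem isBranch_image_lift_iff {C : Set (SeqNode μ)} :
    IsBranch (lift h '' T) (lift h '' C) ↔ IsBranch T C := by
  simp only [IsBranch, image_subset_image_iff (lift_injective h), forall_mem_image,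
    lift_init_lift_iff]

theorem branchesExtend_image_lift_iff : BranchesExtend η (lift h '' T) ↔ BranchesExtend η T := by
  constructor
  · intro hT C hC δ hδ hlen
    obtain ⟨_, hs, hCs⟩ := hT _ ((isBranch_image_lift_iff h).2 hC) δ hδ (forall_mem_image.2 hlen)
    rw [seqLevel_image_lift] at hs
    obtain ⟨s, hs, rfl⟩ := hs
    exact ⟨s, hs, fun u hu => hCs _ (mem_image_of_mem _ hu)⟩
  · intro hT C' hC' δ hδ hlen
    obtain ⟨C, rfl⟩ : ∃ C, C' = lift h '' C :=
      ⟨_, (image_preimage_eq_of_subset (hC'.1.trans (image_subset_range _ _))).symm⟩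
    obtain ⟨s, hs, hCs⟩ :=
      hT C ((isBranch_image_lift_iff h).1 hC') δ hδ fun u hu => hlen _ (mem_image_of_mem _ hu)
    exact ⟨lift h s, seqLevel_image_lift h T δ ▸ mem_image_of_mem _ hs, forall_mem_image.2 hCs⟩

theorem isPerfect_image_lift_iff : IsPerfect (lift h '' T) ↔ IsPerfect T := by
  constructor
  · intro hT t ht
    obtain ⟨_, ⟨s, hs, rfl⟩, _, ⟨u, hu, rfl⟩, hrest⟩ := hT _ (mem_image_of_mem _ ht)
    exact ⟨s, hs, u, hu, hrest⟩
  · rintro hT _ ⟨t, ht, rfl⟩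
    obtain ⟨s, hs, u, hu, hrest⟩ := hT t ht
    exact ⟨_, mem_image_of_mem _ hs, _, mem_image_of_mem _ hu, hrest⟩

theorem isRegularTreeIn_image_lift_iff :
    IsRegularTreeIn κ η (lift h '' T) ↔ IsRegularTreeIn μ η T := by
  simp only [isRegularTreeIn_iff, isSeqTree_image_lift_iff, branchesExtend_image_lift_iff,
    isPerfect_image_lift_iff, seqLevel_image_lift, mk_image_eq (lift_injective h),
    forall_mem_image, len_lift]

theorem levelProd_image_lift (X : Fin d → Set (SeqNode μ)) :
    LevelProd (fun i => lift h '' X i) = (fun x => lift h ∘ x) '' LevelProd X := by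
  ext x'
  constructor
  · rintro ⟨α, hx'⟩
    choose x hxX hx using fun i => (hx' i).1
    refine ⟨x, ⟨α, fun i => ⟨hxX i, ?_⟩⟩, funext hx⟩
    rw [← len_lift h, hx i]
    exact (hx' i).2
  · rintro ⟨x, ⟨α, hx⟩, rfl⟩
    exact ⟨α, fun i => ⟨mem_image_of_mem _ (hx i).1, (hx i).2⟩⟩

theorem monoOn_image_lift_iff {X : Fin d → Set (SeqNode μ)}
    {c : (Fin d → SeqNode κ) → Ordinal.{0}} :
    MonoOn c (fun i => lift h '' X i) ↔ MonoOn (fun x => c (lift h ∘ x)) X := by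
  simp only [MonoOn, levelProd_image_lift, forall_mem_image]

theorem isSDMatrixIn_image_lift_iff {T X : Fin d → Set (SeqNode μ)} :
    IsSDMatrixIn η (fun i => lift h '' T i) (fun i => lift h '' X i) ↔ IsSDMatrixIn η T X := by
  have hdom : ∀ (i : Fin d) (α : Ordinal.{0}) (t : SeqNode μ),
      Dominates (lift h '' X i) (lift h '' SeqLevel (T i) (α + 1) ∩ Cone (lift h t)) ↔
        Dominates (X i) (SeqLevel (T i) (α + 1) ∩ Cone t) := fun i α t => by
    simp only [Dominates, image_lift_inter_cone, forall_mem_image,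
      exists_mem_image, lift_init_lift_iff]
  simp only [IsSDMatrixIn, seqLevel_image_lift, image_subset_image_iff (lift_injective h)]
  constructor
  · rintro ⟨α, β, hαβ, hβη, t', ht', hX⟩
    choose t ht hteq using ht'
    obtain rfl : t' = fun i => lift h (t i) := funext fun i => (hteq i).symm
    exact ⟨α, β, hαβ, hβη, t, ht, fun i => ⟨(hX i).1, (hdom i α (t i)).1 (hX i).2⟩⟩
  · rintro ⟨α, β, hαβ, hβη, t, ht, hX⟩
    exact ⟨α, β, hαβ, hβη, fun i => lift h (t i), fun i => mem_image_of_mem _ (ht i),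
      fun i => ⟨(hX i).1, (hdom i α (t i)).2 (hX i).2⟩⟩

end SeqNode

/-- `SDHL(d,σ,η)` for trees of height `η` inside `^{<κ}κ` all of whose nodes lie in `^{<η}η`;
for `η = μ.ord ≤ κ.ord` this is `SDHL d σ μ` transported along `SeqNode.lift`. -/
def SDHLIn (d : ℕ) (σ κ : Cardinal.{0}) (η : Ordinal.{0}) : Prop :=
  ∀ T : Fin d → Set (SeqNode κ), (∀ i, IsRegularTreeIn κ η (T i)) →
    (∀ i, ∀ t ∈ T i, t.BoundedBy η) →
    ∀ c : (Fin d → SeqNode κ) → Ordinal.{0}, (∀ x ∈ LevelProd T, c x < σ.ord) →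
      ∃ X : Fin d → Set (SeqNode κ), (∀ i, X i ⊆ T i) ∧ IsSDMatrixIn η T X ∧ MonoOn c X

open SeqNode in
theorem sdhl_iff_sdhlIn {d : ℕ} {σ κ μ : Cardinal.{0}} (h : μ.ord ≤ κ.ord) :
    SDHL d σ μ ↔ SDHLIn d σ κ μ.ord := by
  constructor
  · intro hS T' hT' hb c hc
    obtain ⟨T, rfl⟩ := exists_eq_image_lift h fun i t ht => (range_lift h).symm ▸ hb i t ht
    obtain ⟨X, hXT, hX, hmono⟩ := hS T (fun i => (isRegularTreeIn_image_lift_iff h).1 (hT' i))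
      (fun x => c (lift h ∘ x))
      (fun x hx => hc _ (levelProd_image_lift h T ▸ mem_image_of_mem _ hx))
    exact ⟨fun i => lift h '' X i, fun i => image_mono (hXT i),
      (isSDMatrixIn_image_lift_iff h).2 hX, (monoOn_image_lift_iff h).2 hmono⟩
  · intro hS T hT c hc
    let c' := Function.extend (fun x : Fin d → SeqNode μ => lift h ∘ x) c 0
    have hc' : ∀ x, c' (lift h ∘ x) = c x := (lift_injective h).comp_left.extend_apply c 0
    obtain ⟨X', hX'T, hX', hmono⟩ := hS (fun i => lift h '' T i)
      (fun i => (isRegularTreeIn_image_lift_iff h).2 (hT i))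
      (fun i => forall_mem_image.2 fun t _ => boundedBy_lift h t)
      c' (by rw [levelProd_image_lift]; rintro _ ⟨x, hx, rfl⟩; exact hc' x ▸ hc x hx)
    obtain ⟨X, rfl⟩ := exists_eq_image_lift h fun i => (hX'T i).trans (image_subset_range _ _)
    refine ⟨X, fun i => (image_subset_image_iff (lift_injective h)).1 (hX'T i),
      (isSDMatrixIn_image_lift_iff h).1 hX', ?_⟩
    simpa only [MonoOn, hc'] using (monoOn_image_lift_iff h).1 hmono

namespace IsNormalUltrafilterOn

variable {κ : Cardinal.{0}} {U : Set (Set Ordinal.{0})} (hU : IsNormalUltrafilterOn U κ)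

/-- `U` as an ultrafilter on all ordinals: a set is large when its part below `κ` lies in `U`. -/
def ultrafilter : Ultrafilter Ordinal.{0} :=
  .ofComplNotMemIff
    { sets := {A | A ∩ Iio κ.ord ∈ U}
      univ_sets := by
        change Set.univ ∩ Iio κ.ord ∈ U
        rw [univ_inter]
        exact hU.1.2.1
      sets_of_superset := fun hA hAB =>
        hU.1.2.2.2.1 _ hA _ (inter_subset_inter_left _ hAB) inter_subset_right
      inter_sets := fun {A B} hA hB => by
        change A ∩ B ∩ Iio κ.ord ∈ U
        rw [inter_inter_distrib_right]
        exact hU.1.2.2.2.2.1 _ hA _ hB }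
    fun A => by
      change Aᶜ ∩ Iio κ.ord ∉ U ↔ A ∩ Iio κ.ord ∈ U
      have hcompl : Iio κ.ord \ (A ∩ Iio κ.ord) = Aᶜ ∩ Iio κ.ord := by
        ext; simp [and_comm]
      constructor
      · intro h
        exact (hU.1.2.2.2.2.2 _ inter_subset_right).resolve_right (hcompl ▸ h)
      · intro h h'
        apply hU.1.2.2.1
        have := hU.1.2.2.2.2.1 _ h _ h'
        rwa [← inter_inter_distrib_right, inter_compl_self, empty_inter] at this

theorem mem_ultrafilter_iff {A : Set Ordinal.{0}} (hA : A ⊆ Iio κ.ord) :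
    A ∈ hU.ultrafilter ↔ A ∈ U := by
  change A ∩ Iio κ.ord ∈ U ↔ A ∈ U
  rw [inter_eq_left.2 hA]

theorem eventually_lt_ord : ∀ᶠ β in hU.ultrafilter, β < κ.ord := by
  change Iio κ.ord ∩ Iio κ.ord ∈ U
  simpa using hU.1.2.1

theorem eventually_ne (γ : Ordinal.{0}) : ∀ᶠ β in hU.ultrafilter, β ≠ γ := by
  refine Ultrafilter.eventually_not.2 fun h => ?_
  change {β | β = γ} ∩ Iio κ.ord ∈ U at h
  by_cases hγ : γ < κ.ord
  · exact hU.2.2.1 γ (by simpa [hγ] using h)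
  · exact hU.1.2.2.1 (by simpa [hγ] using h)

theorem cardinalInterFilter :
    CardinalInterFilter (hU.ultrafilter : Filter Ordinal.{0}) (Cardinal.lift.{1} κ) where
  cardinal_sInter_mem S hS hmem := by
    change ⋂₀ S ∩ Iio κ.ord ∈ U
    rcases S.eq_empty_or_nonempty with rfl | hne
    · simpa using hU.1.2.1
    have : ⋂₀ ((· ∩ Iio κ.ord) '' S) ∈ U :=
      hU.2.1 _ (image_subset_iff.2 hmem) (hne.image _) (mk_image_le.trans_lt hS)
    convert this using 1
    ext β
    obtain ⟨s, hs⟩ := hne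
    simp only [mem_inter_iff, mem_sInter, mem_image, forall_exists_index, and_imp,
      forall_apply_eq_imp_iff₂]
    exact ⟨fun h t ht => ⟨h.1 t ht, h.2⟩, fun h => ⟨fun t ht => (h t ht).1, (h s hs).2⟩⟩

theorem eventually_forall_mem {α : Type 1} {S : Set α} (hS : #S < Cardinal.lift.{1} κ)
    {P : ∀ x ∈ S, Ordinal.{0} → Prop} (h : ∀ x (hx : x ∈ S), ∀ᶠ β in hU.ultrafilter, P x hx β) :
    ∀ᶠ β in hU.ultrafilter, ∀ x (hx : x ∈ S), P x hx β :=
  haveI := hU.cardinalInterFilter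
  (eventually_cardinal_ball hS).2 h

theorem eventually_forall_lt {γ : Ordinal.{0}} (hγ : γ < κ.ord)
    {P : ∀ ξ < γ, Ordinal.{0} → Prop} (h : ∀ ξ (hξ : ξ < γ), ∀ᶠ β in hU.ultrafilter, P ξ hξ β) :
    ∀ᶠ β in hU.ultrafilter, ∀ ξ (hξ : ξ < γ), P ξ hξ β :=
  hU.eventually_forall_mem (S := Iio γ)
    (by rw [mk_Iio_ordinal, Cardinal.lift_lt]; exact lt_ord.1 hγ) h

theorem eventually_gt {γ : Ordinal.{0}} (hγ : γ < κ.ord) : ∀ᶠ β in hU.ultrafilter, γ < β := by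
  filter_upwards [hU.eventually_forall_lt hγ fun ξ _ => hU.eventually_ne ξ, hU.eventually_ne γ]
    with β hβ hβγ
  exact (not_lt.1 fun h => hβ β h rfl).lt_of_ne' hβγ

theorem eventually_forall_lt_diag {P : Ordinal.{0} → Ordinal.{0} → Prop}
    (h : ∀ α < κ.ord, ∀ᶠ β in hU.ultrafilter, P α β) :
    ∀ᶠ β in hU.ultrafilter, ∀ α < β, P α β := by
  have hdiag := hU.2.2.2 (fun α => {β | P α β} ∩ Iio κ.ord) h
  rw [← hU.mem_ultrafilter_iff fun β hβ => hβ.1] at hdiag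
  filter_upwards [hdiag] with β hβ α hα
  exact (hβ.2 α hα).1

/-- Fodor's lemma for normal ultrafilters. -/
theorem exists_eventually_eq_of_regressive {f : Ordinal.{0} → Ordinal.{0}}
    (hf : ∀ᶠ β in hU.ultrafilter, f β < β) :
    ∃ c < κ.ord, ∀ᶠ β in hU.ultrafilter, f β = c := by
  by_contra! hne
  obtain ⟨β, hβ, hfβ⟩ := ((hU.eventually_forall_lt_diag fun c hc =>
    hne c hc).and hf).exists
  exact hβ _ hfβ rfl

theorem exists_eventually_eq_of_mk_lt {α : Type 1} {S : Set α} (hS : #S < Cardinal.lift.{1} κ)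
    {f : Ordinal.{0} → α} (hf : ∀ᶠ β in hU.ultrafilter, f β ∈ S) :
    ∃ s ∈ S, ∀ᶠ β in hU.ultrafilter, f β = s := by
  by_contra! hne
  obtain ⟨β, hβ, hfβ⟩ := ((hU.eventually_forall_mem hS fun s hs =>
    hne s hs).and hf).exists
  exact hβ _ hfβ rfl

theorem eventually_ord_card_eq : ∀ᶠ β : Ordinal.{0} in hU.ultrafilter, β.card.ord = β := by
  by_contra hne
  obtain ⟨c, hc, hβc⟩ := hU.exists_eventually_eq_of_regressive
    ((Ultrafilter.eventually_not.2 hne).mono fun β h => (ord_card_le β).lt_of_ne h)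
  -- embeddings `Iio β ↪ Iio c`, evaluated at each `γ < κ`, stabilise to an embedding
  -- `Iio κ ↪ Iio c`
  have he : ∀ β : Ordinal.{0}, β.card.ord = c → Nonempty (Iio β ↪ Iio c) := fun β hβ => by
    rw [← Cardinal.le_def, mk_Iio_ordinal, mk_Iio_ordinal, ← hβ, card_ord]
  let f (γ β : Ordinal.{0}) : Ordinal.{0} :=
    if h : γ < β ∧ β.card.ord = c then ((he β h.2).some ⟨γ, h.1⟩).1 else 0
  have hf : ∀ γ < κ.ord, ∀ᶠ β in hU.ultrafilter, γ < β ∧ β.card.ord = c := fun γ hγ =>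
    (hU.eventually_gt hγ).and hβc
  have hν : ∀ γ < κ.ord, ∃ ν ∈ Iio c, ∀ᶠ β in hU.ultrafilter, f γ β = ν := fun γ hγ =>
    hU.exists_eventually_eq_of_mk_lt
      (by rw [mk_Iio_ordinal, Cardinal.lift_lt]; exact lt_ord.1 hc)
      ((hf γ hγ).mono fun β h => by simp only [f, dif_pos h]; exact Subtype.prop _)
  choose ν hνc hν using hν
  have hinj : Function.Injective fun γ : Iio κ.ord => (⟨ν γ γ.2, hνc γ γ.2⟩ : Iio c) := by
    rintro ⟨γ₁, h₁⟩ ⟨γ₂, h₂⟩ heq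
    obtain ⟨β, ⟨hβ₁, hf₁⟩, ⟨hβ₂, hf₂⟩⟩ :=
      (((hf γ₁ h₁).and (hν γ₁ h₁)).and ((hf γ₂ h₂).and (hν γ₂ h₂))).exists
    simp only [f, dif_pos hβ₁, dif_pos hβ₂] at hf₁ hf₂
    have := (he β hβ₁.2).some.injective (Subtype.ext (hf₁.trans
      ((congrArg Subtype.val heq).trans hf₂.symm)))
    exact Subtype.ext (congrArg Subtype.val this :)
  have := Cardinal.mk_le_of_injective hinj
  rw [mk_Iio_ordinal, mk_Iio_ordinal, Cardinal.lift_le, card_ord] at this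
  exact this.not_gt (lt_ord.1 hc)

theorem eventually_boundedBy (t : SeqNode κ) : ∀ᶠ β in hU.ultrafilter, t.BoundedBy β :=
  (hU.eventually_gt t.len_lt).and
    (hU.eventually_forall_lt t.len_lt fun ξ hξ => hU.eventually_gt (t.val_lt ξ hξ))

theorem exists_eventually_eq_of_boundedBy {F : Ordinal.{0} → SeqNode κ}
    (hF : ∀ᶠ β in hU.ultrafilter, (F β).BoundedBy β) :
    ∃ t, ∀ᶠ β in hU.ultrafilter, F β = t := by
  obtain ⟨γ, hγ, hlen⟩ := hU.exists_eventually_eq_of_regressive (hF.mono fun β h => h.1)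
  have hval : ∀ ξ < γ, ∃ c < κ.ord, ∀ᶠ β in hU.ultrafilter, (F β).val ξ = c := fun ξ hξ =>
    hU.exists_eventually_eq_of_regressive <| by
      filter_upwards [hF, hlen] with β hβ hβγ
      exact hβ.2 ξ (hβγ ▸ hξ)
  choose c hcκ hc using hval
  refine ⟨⟨γ, hγ, fun ξ => if h : ξ < γ then c ξ h else 0,
    fun ξ hξ => by simpa [dif_pos hξ] using hcκ ξ hξ, fun ξ hξ => dif_neg hξ.not_gt⟩, ?_⟩
  filter_upwards [hlen, hU.eventually_forall_lt hγ hc] with β hβγ hβ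
  exact SeqNode.ext_of_len_eq hβγ fun ξ hξ => (hβ ξ (hβγ ▸ hξ)).trans (dif_pos _).symm

end IsNormalUltrafilterOn

section LimitTree

variable {κ : Cardinal.{0}} {U : Set (Set Ordinal.{0})} (hU : IsNormalUltrafilterOn U κ)
  {T : Ordinal.{0} → Set (SeqNode κ)}

/-- Łoś's theorem for existential statements over the limit tree `liminf T U`. -/
theorem exists_mem_liminf_of_eventually {P : SeqNode κ → Ordinal.{0} → Prop}
    (h : ∀ᶠ β in hU.ultrafilter, ∃ t ∈ T β, t.BoundedBy β ∧ P t β) :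
    ∃ t ∈ liminf T hU.ultrafilter, ∀ᶠ β in hU.ultrafilter, P t β := by
  obtain ⟨-, t₀, -⟩ := h.exists
  have : Nonempty (SeqNode κ) := ⟨t₀⟩
  choose! F hFT hFb hFP using fun β (hβ : ∃ t ∈ T β, t.BoundedBy β ∧ P t β) => hβ
  obtain ⟨t, ht⟩ := hU.exists_eventually_eq_of_boundedBy (h.mono hFb)
  refine ⟨t, mem_liminf_iff_eventually_mem.2 ?_, ?_⟩
  · filter_upwards [h, ht] with β hβ hFt
    exact hFt ▸ hFT β hβ
  · filter_upwards [h, ht] with β hβ hFt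
    exact hFt ▸ hFP β hβ

theorem eventually_subset_of_mk_lt {S : Set (SeqNode κ)} (hS : S ⊆ liminf T hU.ultrafilter)
    (hSκ : #S < Cardinal.lift.{1} κ) : ∀ᶠ β in hU.ultrafilter, S ⊆ T β :=
  hU.eventually_forall_mem hSκ fun _ ht => mem_liminf_iff_eventually_mem.1 (hS ht)

theorem eventually_seqLevel_subset_liminf
    (hT : ∀ᶠ β in hU.ultrafilter, ∀ t ∈ T β, t.BoundedBy β) (γ : Ordinal.{0}) :
    ∀ᶠ β in hU.ultrafilter, SeqLevel (T β) γ ⊆ liminf T hU.ultrafilter := by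
  by_contra hne
  obtain ⟨t, ht, hnot⟩ := exists_mem_liminf_of_eventually hU
    (P := fun t _ => t ∉ liminf T hU.ultrafilter) <| by
      filter_upwards [Ultrafilter.eventually_not.2 hne, hT] with β hβ hTβ
      obtain ⟨t, ht, htS⟩ := not_subset.1 hβ
      exact ⟨t, ht.1, hTβ t ht.1, htS⟩
  exact hnot.exists.elim fun _ h => h ht

theorem isSeqTree_liminf (hT : ∀ᶠ β in hU.ultrafilter, IsSeqTree (T β)) :
    IsSeqTree (liminf T hU.ultrafilter) := fun t ht s hs => by
  rw [mem_liminf_iff_eventually_mem] at ht ⊢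
  filter_upwards [hT, ht] with β hβ htβ using hβ t htβ s hs

theorem mk_seqLevel_liminf_lt
    (hT : ∀ᶠ β in hU.ultrafilter, ∀ γ < β, #(SeqLevel (T β) γ) < Cardinal.lift.{1} β.card)
    {γ : Ordinal.{0}} (hγ : γ < κ.ord) :
    #(SeqLevel (liminf T hU.ultrafilter) γ) < Cardinal.lift.{1} κ := by
  by_contra! hge
  obtain ⟨g⟩ : Nonempty (Iio κ.ord ↪ SeqLevel (liminf T hU.ultrafilter) γ) := by
    rwa [← Cardinal.le_def, mk_Iio_ordinal, card_ord]
  -- a level of size `κ` would, by normality, put levels of size `β` into the trees `T β`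
  have hg : ∀ᶠ β in hU.ultrafilter, ∀ α < β, ∀ hα : α < κ.ord, (g ⟨α, hα⟩).1 ∈ T β :=
    hU.eventually_forall_lt_diag fun α hα =>
      (mem_liminf_iff_eventually_mem.1 (g ⟨α, hα⟩).2.1).mono fun _ h _ => h
  obtain ⟨β, hβ, hcard, hγβ, hβκ⟩ :=
    (hg.and (hT.and ((hU.eventually_gt hγ).and hU.eventually_lt_ord))).exists
  have hle : #(Iio β) ≤ #(SeqLevel (T β) γ) :=
    Cardinal.mk_le_of_injective (f := fun α => ⟨g ⟨α, α.2.trans hβκ⟩, hβ α α.2 _, (g _).2.2⟩)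
      fun α₁ α₂ h =>
        Subtype.ext (congrArg Subtype.val (g.injective (Subtype.ext (congrArg Subtype.val h :))) :)
  rw [mk_Iio_ordinal] at hle
  exact (hle.trans_lt (hcard γ hγβ)).false

theorem branchesExtend_liminf (hκ : ℵ₀ ≤ κ)
    (hT : ∀ᶠ β in hU.ultrafilter, BranchesExtend β (T β) ∧ ∀ t ∈ T β, t.BoundedBy β) :
    BranchesExtend κ.ord (liminf T hU.ultrafilter) := by
  intro C hC δ hδ hlen
  have hCκ : #C < Cardinal.lift.{1} κ := by
    rw [← mk_image_eq_of_injOn _ _ hC.injOn_len]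
    refine (mk_le_mk_of_subset (t := Iio (Order.succ δ)) ?_).trans_lt ?_
    · rintro _ ⟨u, hu, rfl⟩
      exact Order.lt_succ_of_le (hlen u hu)
    · rw [mk_Iio_ordinal, Cardinal.lift_lt, ← lt_ord]
      exact (isSuccLimit_ord hκ).succ_lt hδ
  obtain ⟨s, hs, hsC⟩ := exists_mem_liminf_of_eventually hU
    (P := fun s _ => s.len = δ ∧ ∀ u ∈ C, u.Init s) <| by
      filter_upwards [hT, eventually_subset_of_mk_lt hU hC.1 hCκ, hU.eventually_gt hδ]
        with β hβ hCβ hδβ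
      obtain ⟨s, hs, hCs⟩ := hβ.1 C ⟨hCβ, hC.2⟩ δ hδβ hlen
      exact ⟨s, hs.1, hβ.2 s hs.1, hs.2, hCs⟩
  obtain ⟨-, hslen, hCs⟩ := hsC.exists
  exact ⟨s, ⟨hs, hslen⟩, hCs⟩

theorem isPerfect_liminf
    (hT : ∀ᶠ β in hU.ultrafilter, IsPerfect (T β) ∧ ∀ t ∈ T β, t.BoundedBy β) :
    IsPerfect (liminf T hU.ultrafilter) := by
  intro t ht
  obtain ⟨s, hs, hsP⟩ := exists_mem_liminf_of_eventually hU
    (P := fun s β => ∃ u ∈ T β, u.BoundedBy β ∧ t.Init s ∧ t.Init u ∧ ¬s.Init u ∧ ¬u.Init s) <| by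
      filter_upwards [hT, mem_liminf_iff_eventually_mem.1 ht] with β hβ htβ
      obtain ⟨s, hs, u, hu, hts, htu, hsu, hus⟩ := hβ.1 t htβ
      exact ⟨s, hs, hβ.2 s hs, u, hu, hβ.2 u hu, hts, htu, hsu, hus⟩
  obtain ⟨u, hu, huP⟩ := exists_mem_liminf_of_eventually hU hsP
  obtain ⟨-, hts, htu, hsu, hus⟩ := huP.exists
  exact ⟨s, hs, u, hu, hts, htu, hsu, hus⟩

theorem isRegularTree_liminf (hκ : ℵ₀ ≤ κ)
    (hT : ∀ᶠ β in hU.ultrafilter, IsRegularTreeIn κ β (T β) ∧ ∀ t ∈ T β, t.BoundedBy β) :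
    IsRegularTree κ (liminf T hU.ultrafilter) := by
  simp only [isRegularTreeIn_iff] at hT
  refine isRegularTreeIn_iff.2 ⟨isSeqTree_liminf hU (hT.mono fun _ h => h.1.1),
    fun t _ => t.len_lt, fun γ hγ => ?_, branchesExtend_liminf hU hκ
      (hT.mono fun _ h => ⟨h.1.2.2.2.1, h.2⟩), isPerfect_liminf hU
      (hT.mono fun _ h => ⟨h.1.2.2.2.2, h.2⟩)⟩
  rw [card_ord]
  exact mk_seqLevel_liminf_lt hU (hT.mono fun _ h => h.1.2.2.1) hγ

end LimitTree

section Reflection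

variable {κ : Cardinal.{0}} {T : Set (SeqNode κ)} {β : Ordinal.{0}}

def Reflects (T : Set (SeqNode κ)) (β : Ordinal.{0}) : Prop :=
  (∀ t ∈ TreeTrunc T β, t.BoundedBy β) ∧ IsPerfect (TreeTrunc T β) ∧
    ∀ δ < β, #(SeqLevel T δ) < Cardinal.lift.{1} β.card

theorem seqLevel_treeTrunc {δ : Ordinal.{0}} (hδ : δ < β) :
    SeqLevel (TreeTrunc T β) δ = SeqLevel T δ := by
  ext t
  exact ⟨fun ht => ⟨ht.1.1, ht.2⟩, fun ht => ⟨⟨ht.1, ht.2 ▸ hδ⟩, ht.2⟩⟩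

theorem isRegularTreeIn_treeTrunc (hT : IsRegularTree κ T) (hβ : β ≤ κ.ord)
    (h : Reflects T β) : IsRegularTreeIn κ β (TreeTrunc T β) := by
  obtain ⟨htree, -, -, hext, -⟩ := isRegularTreeIn_iff.1 hT
  refine isRegularTreeIn_iff.2 ⟨fun t ht s hs => ⟨htree t ht.1 s hs, hs.1.trans_lt ht.2⟩,
    fun t ht => ht.2, fun δ hδ => by rw [seqLevel_treeTrunc hδ]; exact h.2.2 δ hδ, ?_, h.2.1⟩
  intro C hC δ hδ hlen
  obtain ⟨s, hs, hCs⟩ := hext C ⟨hC.1.trans (sep_subset _ _), hC.2⟩ δ (hδ.trans_le hβ) hlen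
  exact ⟨s, by rwa [seqLevel_treeTrunc hδ], hCs⟩

theorem IsSDMatrixIn.of_treeTrunc {d : ℕ} {T X : Fin d → Set (SeqNode κ)} (hβ : β ≤ κ.ord)
    (h : IsSDMatrixIn β (fun i => TreeTrunc (T i) β) X) : IsSDMatrix κ T X := by
  obtain ⟨α, β', hαβ', hβ'β, t, ht, hX⟩ := h
  have hα : α + 1 < β := (Order.add_one_le_of_lt hαβ').trans_lt hβ'β
  refine ⟨α, β', hαβ', hβ'β.trans_le hβ, t, fun i => ?_, fun i => ?_⟩
  · rw [← seqLevel_treeTrunc (hαβ'.trans hβ'β)]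
    exact ht i
  · rw [← seqLevel_treeTrunc hβ'β, ← seqLevel_treeTrunc hα]
    exact hX i

namespace IsNormalUltrafilterOn

variable {U : Set (Set Ordinal.{0})} (hU : IsNormalUltrafilterOn U κ)

theorem eventually_forall_mem_treeTrunc
    (hT : ∀ α < κ.ord, #(SeqLevel T α) < Cardinal.lift.{1} κ) {P : SeqNode κ → Ordinal.{0} → Prop}
    (h : ∀ t ∈ T, ∀ᶠ β in hU.ultrafilter, P t β) :
    ∀ᶠ β in hU.ultrafilter, ∀ t ∈ TreeTrunc T β, P t β := by
  have hlevel : ∀ δ < κ.ord, ∀ᶠ β in hU.ultrafilter, ∀ t ∈ SeqLevel T δ, P t β :=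
    fun δ hδ => hU.eventually_forall_mem (hT δ hδ) fun t ht => h t ht.1
  filter_upwards [hU.eventually_forall_lt_diag hlevel] with β hβ t ht
  exact hβ t.len ht.2 t ⟨ht.1, rfl⟩

theorem eventually_reflects (hT : IsRegularTree κ T) : ∀ᶠ β in hU.ultrafilter, Reflects T β := by
  obtain ⟨-, -, hcard, -, hperf⟩ := isRegularTreeIn_iff.1 hT
  simp only [card_ord] at hcard
  refine ((hU.eventually_forall_mem_treeTrunc hcard fun t _ => hU.eventually_boundedBy t).and
    ((hU.eventually_forall_mem_treeTrunc hcard fun t ht => ?_).and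
      (hU.eventually_forall_lt_diag fun δ hδ => ?_))).mono
        fun β h => ⟨h.1, fun t ht => h.2.1 t ht, h.2.2⟩
  · obtain ⟨s, hs, u, hu, hts, htu, hsu, hus⟩ := hperf t ht
    filter_upwards [hU.eventually_gt s.len_lt, hU.eventually_gt u.len_lt] with β hsβ huβ
    exact ⟨s, ⟨hs, hsβ⟩, u, ⟨hu, huβ⟩, hts, htu, hsu, hus⟩
  · obtain ⟨μ, hμκ, hμ⟩ := Cardinal.lt_lift_iff.1 (hcard δ hδ)
    filter_upwards [hU.eventually_gt (ord_lt_ord.2 hμκ), hU.eventually_ord_card_eq] with β hμβ hβ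
    rw [← hμ, Cardinal.lift_lt, ← ord_lt_ord, hβ]
    exact hμβ

end IsNormalUltrafilterOn

end Reflection

theorem levelProd_mono {κ : Cardinal.{0}} {d : ℕ} {X Y : Fin d → Set (SeqNode κ)}
    (h : ∀ i, X i ⊆ Y i) : LevelProd X ⊆ LevelProd Y :=
  fun _ ⟨α, hx⟩ => ⟨α, fun i => ⟨h i (hx i).1, (hx i).2⟩⟩

theorem mk_levelProd_lt {κ : Cardinal.{0}} {d : ℕ} {X : Fin d → Set (SeqNode κ)}
    {c : Cardinal.{1}} (hc : ℵ₀ ≤ c) (hX : ∀ i, #(X i) < c) : #(LevelProd X) < c := by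
  refine (mk_le_mk_of_subset (t := univ.pi X) fun x hx i _ => (hx.choose_spec i).1).trans_lt ?_
  rw [(Equiv.Set.univPi X).cardinal_eq, mk_pi, prod_eq_of_fintype, Cardinal.lift_uzero]
  exact Finset.prod_induction _ (· < c) (fun _ _ => mul_lt_of_lt hc)
    (one_lt_aleph0.trans_le hc) fun i _ => hX i

def IsSDHLCounterexample {κ : Cardinal.{0}} {d : ℕ} (σ : Cardinal.{0}) (η : Ordinal.{0})
    (T : Fin d → Set (SeqNode κ)) (c : (Fin d → SeqNode κ) → Ordinal.{0}) : Prop :=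
  (∀ i, IsRegularTreeIn κ η (T i)) ∧ (∀ i, ∀ t ∈ T i, t.BoundedBy η) ∧
    (∀ x ∈ LevelProd T, c x < σ.ord) ∧
    ∀ X, (∀ i, X i ⊆ T i) → IsSDMatrixIn η T X → ¬MonoOn c X

theorem exists_isSDHLCounterexample {d : ℕ} {σ κ : Cardinal.{0}} {η : Ordinal.{0}}
    (h : ¬SDHLIn d σ κ η) : ∃ (T : Fin d → Set (SeqNode κ)) (c : (Fin d → SeqNode κ) → Ordinal.{0}),
      IsSDHLCounterexample σ η T c := by
  simp only [SDHLIn, not_forall, exists_prop, not_exists, not_and] at h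
  obtain ⟨T, hT, hb, c, hc, hX⟩ := h
  exact ⟨T, c, hT, hb, hc, hX⟩

namespace IsNormalUltrafilterOn

variable {κ : Cardinal.{0}} {U : Set (Set Ordinal.{0})} (hU : IsNormalUltrafilterOn U κ)
  {d : ℕ} {σ : Cardinal.{0}}

theorem sdhl_of_eventually_sdhlIn (h : ∀ᶠ β in hU.ultrafilter, SDHLIn d σ κ β) :
    SDHL d σ κ := by
  intro T hT c hc
  obtain ⟨β, hβ, hrefl, hβκ⟩ := (h.and ((eventually_all.2 fun i =>
    hU.eventually_reflects (hT i)).and hU.eventually_lt_ord)).exists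
  obtain ⟨X, hXT, hX, hmono⟩ := hβ (fun i => TreeTrunc (T i) β)
    (fun i => isRegularTreeIn_treeTrunc (hT i) hβκ.le (hrefl i)) (fun i => (hrefl i).1) c
    fun x hx => hc x (levelProd_mono (fun i => sep_subset _ _) hx)
  exact ⟨X, fun i => (hXT i).trans (sep_subset _ _), hX.of_treeTrunc hβκ.le, hmono⟩

variable {T : Ordinal.{0} → Fin d → Set (SeqNode κ)}

theorem eventually_isSDMatrixIn_of_liminf
    (hT : ∀ᶠ β in hU.ultrafilter, ∀ i, ∀ t ∈ T β i, t.BoundedBy β)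
    {X : Fin d → Set (SeqNode κ)} (hXκ : ∀ i, #(X i) < Cardinal.lift.{1} κ)
    (hX : IsSDMatrix κ (fun i => liminf (fun β => T β i) hU.ultrafilter) X) :
    ∀ᶠ β in hU.ultrafilter, (∀ i, X i ⊆ T β i) ∧ IsSDMatrixIn β (T β) X := by
  obtain ⟨α, β', hαβ', hβ'κ, t, ht, hXt⟩ := hX
  filter_upwards [eventually_all.2 fun i =>
      eventually_subset_of_mk_lt hU (fun x hx => ((hXt i).1 hx).1) (hXκ i),
    eventually_all.2 fun i => mem_liminf_iff_eventually_mem.1 (ht i).1,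
    eventually_all.2 fun i =>
      eventually_seqLevel_subset_liminf hU (hT.mono fun _ h => h i) (α + 1),
    hU.eventually_gt hβ'κ] with β hXβ htβ hlevel hβ'β
  exact ⟨hXβ, α, β', hαβ', hβ'β, t, fun i => ⟨htβ i, (ht i).2⟩, fun i =>
    ⟨fun x hx => ⟨hXβ i hx, ((hXt i).1 hx).2⟩,
      fun y hy => (hXt i).2 y ⟨⟨hlevel i hy.1, hy.1.2⟩, hy.2⟩⟩⟩

theorem eventually_monoOn (hκ : ℵ₀ ≤ κ) {c : Ordinal.{0} → (Fin d → SeqNode κ) → Ordinal.{0}}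
    {c' : (Fin d → SeqNode κ) → Ordinal.{0}} {X : Fin d → Set (SeqNode κ)}
    (hXκ : ∀ i, #(X i) < Cardinal.lift.{1} κ)
    (hc : ∀ x ∈ LevelProd X, ∀ᶠ β in hU.ultrafilter, c β x = c' x) (hmono : MonoOn c' X) :
    ∀ᶠ β in hU.ultrafilter, MonoOn (c β) X := by
  have hκ' : ℵ₀ ≤ Cardinal.lift.{1} κ := by simpa using hκ
  filter_upwards [hU.eventually_forall_mem (mk_levelProd_lt hκ' hXκ) hc] with β hβ x hx y hy
  rw [hβ x hx, hβ y hy]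
  exact hmono x hx y hy

theorem eventually_sdhlIn_of_sdhl (hκ : ℵ₀ ≤ κ) (hσ : σ < κ) (h : SDHL d σ κ) :
    ∀ᶠ β in hU.ultrafilter, SDHLIn d σ κ β := by
  by_contra hne
  choose! T c hTc using fun β (hβ : ¬SDHLIn d σ κ β) => exists_isSDHLCounterexample hβ
  have hcex : ∀ᶠ β in hU.ultrafilter, IsSDHLCounterexample σ β (T β) (c β) :=
    (Ultrafilter.eventually_not.2 hne).mono hTc
  let TS i := liminf (fun β => T β i) hU.ultrafilter
  have hTS : ∀ i, IsRegularTree κ (TS i) := fun i =>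
    isRegularTree_liminf hU hκ (hcex.mono fun _ h => ⟨h.1 i, h.2.1 i⟩)
  -- at each tuple, the colourings `c β` take fewer than `κ` values, so they are eventually constant
  have hlim : ∀ x ∈ LevelProd TS, ∃ δ < σ.ord, ∀ᶠ β in hU.ultrafilter, c β x = δ := by
    rintro x ⟨α, hx⟩
    refine hU.exists_eventually_eq_of_mk_lt (S := Iio σ.ord)
      (by rwa [mk_Iio_ordinal, card_ord, Cardinal.lift_lt]) ?_
    filter_upwards [hcex, eventually_all.2 fun i => mem_liminf_iff_eventually_mem.1 (hx i).1]
      with β hβ hxβ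
    exact hβ.2.2.1 x ⟨α, fun i => ⟨hxβ i, (hx i).2⟩⟩
  choose! c' hc'σ hc' using hlim
  obtain ⟨X, hXS, hX, hmono⟩ := h TS hTS c' hc'σ
  have hXκ : ∀ i, #(X i) < Cardinal.lift.{1} κ := fun i => by
    obtain ⟨_, β', _, hβ'κ, _, _, hXlev⟩ := hX
    refine (mk_le_mk_of_subset (hXlev i).1).trans_lt ?_
    simpa using (isRegularTreeIn_iff.1 (hTS i)).2.2.1 β' hβ'κ
  obtain ⟨β, hβ, ⟨hXβ, hβX⟩, hβmono⟩ :=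
    (hcex.and ((hU.eventually_isSDMatrixIn_of_liminf (hcex.mono fun _ h => h.2.1) hXκ hX).and
      (hU.eventually_monoOn hκ hXκ (fun x hx => hc' x (levelProd_mono hXS hx)) hmono))).exists
  exact hβ.2.2.2 X hXβ hβX hβmono

theorem eventually_mem_sdhlSet_iff (hκ : ℵ₀ < κ) (hσ : σ < κ) :
    ∀ᶠ β in hU.ultrafilter, β ∈ SDHLset d σ κ ↔ SDHLIn d σ κ β := by
  filter_upwards [hU.eventually_lt_ord, hU.eventually_ord_card_eq,
    hU.eventually_gt (ord_lt_ord.2 hκ), hU.eventually_gt (ord_lt_ord.2 hσ)] with β hβκ hβ hωβ hσβ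
  rw [ord_aleph0] at hωβ
  rw [← hβ] at hσβ hβκ
  have hiff := sdhl_iff_sdhlIn (d := d) (σ := σ) hβκ.le
  rw [hβ] at hiff
  exact ⟨fun h => hiff.1 h.2.2.2.2, fun h => ⟨hβ ▸ hβκ, Ordinal.aleph0_le_card.2 hωβ.le, hβ,
    ord_lt_ord.1 hσβ, hiff.2 h⟩⟩

end IsNormalUltrafilterOn

/-- For measurable κ with normal ultrafilter U, SDHL(d,σ,κ) holds iff the
set of infinite cardinals α < κ with σ < α at which SDHL(d,σ,α) holds belongs to U. -/
theorem sdhl_iff_mem_normal_ultrafilter (κ : Cardinal.{0}) (hκ : IsMeasurableCard κ)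
    (U : Set (Set Ordinal.{0})) (hU : IsNormalUltrafilterOn U κ) :
    ∀ d : ℕ, 1 ≤ d → ∀ σ : Cardinal.{0}, 0 < σ → σ < κ →
      (SDHL d σ κ ↔ SDHLset d σ κ ∈ U) := by
  intro d _ σ _ hσκ
  have hiff := eventually_congr (hU.eventually_mem_sdhlSet_iff (d := d) hκ.1 hσκ)
  rw [← hU.mem_ultrafilter_iff fun β hβ => hβ.1]
  exact ⟨fun h => hiff.2 (hU.eventually_sdhlIn_of_sdhl hκ.1.le hσκ h),
    fun h => hU.sdhl_of_eventually_sdhlIn (hiff.1 h)⟩
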